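/- arXiv:0807.4059 — 3 statements merged into one kernel-verified Lean document; each statement's English description precedes it below -/
import Mathlib

section
/- For every u in H^1(R^2), ∫_{R^2} |u(x)|^2 / |x| dx ≤ 2 ‖u‖_{L^2} ‖∇u‖_{L^2}. -/
/-!
Write `∂ᵣ` for the radial derivative. For a differentiable `φ` on a `d`-dimensional space,
a Fubini argument with the scaling `∫ f (t • x) dx = t⁻ᵈ ∫ f` shows that for a.e. `x` both
`t ↦ φ (t • x)` and its derivative `t ↦ ‖x‖ ∂ᵣφ (t • x)` are integrable on `(1, ∞)`, so
`φ (t • x) → 0` and `φ x / ‖x‖ = -∫₁^∞ ∂ᵣφ (t • x) dt`. Integrating over `x` and exchanging the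
integrals again gives `(d - 1) ∫ φ / ‖x‖ = -∫ ∂ᵣφ`, since `∫₁^∞ t⁻ᵈ dt = (d - 1)⁻¹`.
For `φ = ‖u‖²` one has `|∂ᵣφ| ≤ 2 ‖u‖ ‖Du‖`, and Cauchy–Schwarz finishes.
-/
open MeasureTheory Set Filter Topology Module
open scoped RealInnerProductSpace

theorem integral_norm_mul_norm_le_sqrt_mul_sqrt {α E F : Type*} [MeasurableSpace α]
    {μ : Measure α} [NormedAddCommGroup E] [NormedAddCommGroup F] {f : α → E} {g : α → F}
    (hf : MemLp f 2 μ) (hg : MemLp g 2 μ) :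
    ∫ a, ‖f a‖ * ‖g a‖ ∂μ ≤ √(∫ a, ‖f a‖ ^ 2 ∂μ) * √(∫ a, ‖g a‖ ^ 2 ∂μ) := by
  have h := integral_mul_norm_le_Lp_mul_Lq (μ := μ) (f := fun a => ‖f a‖) (g := fun a => ‖g a‖)
    Real.HolderConjugate.two_two (by simpa using hf.norm) (by simpa using hg.norm)
  simpa [Real.sqrt_eq_rpow] using h

theorem integrableOn_Ioi_inv_pow {n : ℕ} (hn : 2 ≤ n) {a : ℝ} (ha : 0 < a) :
    IntegrableOn (fun t : ℝ => (t ^ n)⁻¹) (Ioi a) := by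
  have h : EqOn (fun t : ℝ => t ^ (-(n : ℝ))) (fun t => (t ^ n)⁻¹) (Ioi a) := fun t ht => by
    simp [Real.rpow_neg (ha.le.trans ht.le)]
  refine ((integrableOn_Ioi_rpow_iff ha).2 ?_).congr_fun h measurableSet_Ioi
  have : (2 : ℝ) ≤ n := by exact_mod_cast hn
  linarith

theorem integral_Ioi_one_inv_pow {n : ℕ} (hn : 2 ≤ n) :
    ∫ t in Ioi (1 : ℝ), (t ^ n)⁻¹ = ((n : ℝ) - 1)⁻¹ := by
  have h : EqOn (fun t : ℝ => (t ^ n)⁻¹) (fun t => t ^ (-(n : ℝ))) (Ioi 1) := fun t ht => by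
    simp [Real.rpow_neg (zero_le_one.trans ht.le)]
  have : (2 : ℝ) ≤ n := by exact_mod_cast hn
  rw [setIntegral_congr_fun measurableSet_Ioi h, integral_Ioi_rpow_of_lt (by linarith) one_pos,
    Real.one_rpow, show -(n : ℝ) + 1 = -((n : ℝ) - 1) by ring, div_neg, neg_div, neg_neg, one_div]

section RadialDeriv

variable {E F : Type*} [NormedAddCommGroup E] [NormedSpace ℝ E]
  [NormedAddCommGroup F] [NormedSpace ℝ F]

/-- At `y = 0` the direction `‖y‖⁻¹ • y` is `0`, so `radialDeriv u 0 = 0`. -/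
noncomputable def radialDeriv (u : E → F) (y : E) : F := fderiv ℝ u y (‖y‖⁻¹ • y)

theorem norm_radialDeriv_le (u : E → F) (y : E) : ‖radialDeriv u y‖ ≤ ‖fderiv ℝ u y‖ := by
  refine ((fderiv ℝ u y).le_opNorm _).trans (mul_le_of_le_one_right (norm_nonneg _) ?_)
  rw [norm_smul, norm_inv, norm_norm]
  exact inv_mul_le_one_of_le₀ le_rfl (norm_nonneg _)

theorem norm_smul_radialDeriv_smul (u : E → F) (x : E) {t : ℝ} (ht : 0 < t) :
    ‖x‖ • radialDeriv u (t • x) = fderiv ℝ u (t • x) x := by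
  rcases eq_or_ne x 0 with rfl | hx
  · simp
  rw [radialDeriv, norm_smul, Real.norm_of_nonneg ht.le, smul_smul, ← map_smul, smul_smul]
  field_simp
  rw [one_smul]

theorem hasDerivAt_comp_smul {u : E → F} {x : E} {t : ℝ}
    (hu : DifferentiableAt ℝ u (t • x)) (ht : 0 < t) :
    HasDerivAt (fun s : ℝ => u (s • x)) (‖x‖ • radialDeriv u (t • x)) t := by
  rw [norm_smul_radialDeriv_smul u x ht]
  have h := hu.hasFDerivAt.comp_hasDerivAt t ((hasDerivAt_id t).smul_const x)
  simpa [Function.comp_def] using h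

theorem measurable_radialDeriv [MeasurableSpace E] [BorelSpace E]
    [SecondCountableTopology E] [MeasurableSpace F] [BorelSpace F] [CompleteSpace F]
    (u : E → F) : Measurable (radialDeriv u) :=
  ContinuousLinearMap.measurable_apply₂.comp
    ((measurable_fderiv ℝ u).prodMk (measurable_norm.inv.smul measurable_id))

theorem abs_radialDeriv_norm_sq_le {G : Type*} [NormedAddCommGroup G] [InnerProductSpace ℝ G]
    {u : E → G} {y : E} (hu : DifferentiableAt ℝ u y) :
    |radialDeriv (fun y => ‖u y‖ ^ 2) y| ≤ 2 * (‖u y‖ * ‖fderiv ℝ u y‖) := by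
  have h : radialDeriv (fun y => ‖u y‖ ^ 2) y = 2 * ⟪u y, radialDeriv u y⟫ := by
    simp [radialDeriv, hu.hasFDerivAt.norm_sq.fderiv, inner_smul_right]
    ring
  rw [h, abs_mul, abs_two]
  gcongr
  exact (abs_real_inner_le_norm _ _).trans (by gcongr; exact norm_radialDeriv_le u y)

theorem div_norm_eq_neg_integral_radialDeriv_comp_smul {φ : E → ℝ} (hφ : Differentiable ℝ φ)
    (x : E) (hφx : IntegrableOn (fun t : ℝ => φ (t • x)) (Ioi (1 : ℝ)))
    (hφ'x : IntegrableOn (fun t : ℝ => radialDeriv φ (t • x)) (Ioi (1 : ℝ))) :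
    φ x / ‖x‖ = -∫ t in Ioi (1 : ℝ), radialDeriv φ (t • x) := by
  rcases eq_or_ne x 0 with rfl | hx
  · simp [radialDeriv]
  have hderiv : ∀ t ∈ Ici (1 : ℝ),
      HasDerivAt (fun s : ℝ => φ (s • x)) (‖x‖ • radialDeriv φ (t • x)) t :=
    fun t ht => hasDerivAt_comp_smul (hφ _) (one_pos.trans_le ht)
  have hderiv_int : IntegrableOn (fun t : ℝ => ‖x‖ • radialDeriv φ (t • x)) (Ioi 1) :=
    hφ'x.smul ‖x‖
  have hlim : Tendsto (fun s : ℝ => φ (s • x)) atTop (𝓝 0) :=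
    tendsto_zero_of_hasDerivAt_of_integrableOn_Ioi (fun t ht => hderiv t (mem_Ici.2 ht.out.le))
      hderiv_int hφx
  have hFTC := integral_Ioi_of_hasDerivAt_of_tendsto' hderiv hderiv_int hlim
  rw [integral_smul, one_smul, zero_sub, smul_eq_mul] at hFTC
  rw [div_eq_iff (norm_ne_zero_iff.2 hx), ← neg_eq_iff_eq_neg.2 hFTC]
  ring

end RadialDeriv

section Haar

variable {E : Type*} [NormedAddCommGroup E] [NormedSpace ℝ E] [FiniteDimensional ℝ E]
  [MeasurableSpace E] [BorelSpace E] {μ : Measure E} [μ.IsAddHaarMeasure]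

theorem integrable_comp_smul_prod_Ioi {g : E → ℝ} (hgm : Measurable g) (hg : Integrable g μ)
    (hd : 2 ≤ finrank ℝ E) {a : ℝ} (ha : 0 < a) :
    Integrable (fun p : E × ℝ => g (p.2 • p.1)) (μ.prod (volume.restrict (Ioi a))) := by
  have hm : Measurable fun p : E × ℝ => g (p.2 • p.1) :=
    hgm.comp (measurable_snd.smul measurable_fst)
  rw [integrable_prod_iff' hm.aestronglyMeasurable]
  refine ⟨?_, ?_⟩
  · filter_upwards [ae_restrict_mem measurableSet_Ioi] with t ht
    exact hg.comp_smul (ha.trans ht).ne'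
  · refine ((integrableOn_Ioi_inv_pow hd ha).mul_const (∫ x, ‖g x‖ ∂μ)).congr ?_
    filter_upwards [ae_restrict_mem measurableSet_Ioi] with t ht
    rw [Measure.integral_comp_smul_of_nonneg μ (fun x => ‖g x‖) t (hR := (ha.trans ht).le),
      smul_eq_mul]

theorem integral_integral_Ioi_comp_smul {g : E → ℝ} (hgm : Measurable g) (hg : Integrable g μ)
    (hd : 2 ≤ finrank ℝ E) {a : ℝ} (ha : 0 < a) :
    ∫ x, (∫ t in Ioi a, g (t • x)) ∂μ = (∫ t in Ioi a, (t ^ finrank ℝ E)⁻¹) * ∫ x, g x ∂μ := by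
  rw [integral_integral_swap (f := fun x t => g (t • x))
    (integrable_comp_smul_prod_Ioi hgm hg hd ha), ← integral_mul_const]
  refine setIntegral_congr_fun measurableSet_Ioi fun t ht => ?_
  rw [Measure.integral_comp_smul_of_nonneg μ g t (hR := (ha.trans ht).le), smul_eq_mul]

theorem integral_div_norm_eq_neg_integral_radialDeriv (hd : 2 ≤ finrank ℝ E) {φ : E → ℝ}
    (hφ : Differentiable ℝ φ) (hφint : Integrable φ μ) (hφ'int : Integrable (radialDeriv φ) μ) :
    ((finrank ℝ E : ℝ) - 1) * ∫ x, φ x / ‖x‖ ∂μ = -∫ x, radialDeriv φ x ∂μ := by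
  have hφm := hφ.continuous.measurable
  have hφ'm := measurable_radialDeriv φ
  have hray : ∀ᵐ x ∂μ, φ x / ‖x‖ = -∫ t in Ioi (1 : ℝ), radialDeriv φ (t • x) := by
    filter_upwards [(integrable_comp_smul_prod_Ioi hφm hφint hd one_pos).prod_right_ae,
      (integrable_comp_smul_prod_Ioi hφ'm hφ'int hd one_pos).prod_right_ae] with x hφx hφ'x
    exact div_norm_eq_neg_integral_radialDeriv_comp_smul hφ x hφx hφ'x
  have hd' : (finrank ℝ E : ℝ) - 1 ≠ 0 := by
    have : (2 : ℝ) ≤ finrank ℝ E := by exact_mod_cast hd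
    linarith
  rw [integral_congr_ae hray, integral_neg, integral_integral_Ioi_comp_smul hφ'm hφ'int hd one_pos,
    integral_Ioi_one_inv_pow hd]
  field_simp

theorem integral_norm_sq_div_norm_le {F : Type*} [NormedAddCommGroup F] [InnerProductSpace ℝ F]
    (hd : 2 ≤ finrank ℝ E) {u : E → F} (hu : Differentiable ℝ u)
    (hL2 : Integrable (fun x => ‖u x‖ ^ 2) μ) (hgrad : Integrable (fun x => ‖fderiv ℝ u x‖ ^ 2) μ) :
    ((finrank ℝ E : ℝ) - 1) * ∫ x, ‖u x‖ ^ 2 / ‖x‖ ∂μ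
      ≤ 2 * √(∫ x, ‖u x‖ ^ 2 ∂μ) * √(∫ x, ‖fderiv ℝ u x‖ ^ 2 ∂μ) := by
  have hu_mem : MemLp (fun x => ‖u x‖) 2 μ :=
    (memLp_two_iff_integrable_sq hu.continuous.norm.aestronglyMeasurable).2 hL2
  have hDu_mem : MemLp (fun x => ‖fderiv ℝ u x‖) 2 μ := by
    refine (memLp_two_iff_integrable_sq ?_).2 hgrad
    exact (Real.continuous_sqrt.comp_aestronglyMeasurable hgrad.aestronglyMeasurable).congr
      (ae_of_all _ fun x => Real.sqrt_sq (norm_nonneg _))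
  have hprod : Integrable (fun x => ‖u x‖ * ‖fderiv ℝ u x‖) μ := hu_mem.integrable_mul hDu_mem
  have hbound : ∀ x, |radialDeriv (fun y => ‖u y‖ ^ 2) x| ≤ 2 * (‖u x‖ * ‖fderiv ℝ u x‖) :=
    fun x => abs_radialDeriv_norm_sq_le (hu x)
  have hφ'int : Integrable (radialDeriv fun y => ‖u y‖ ^ 2) μ :=
    (hprod.const_mul 2).mono' (measurable_radialDeriv _).aestronglyMeasurable (ae_of_all _ hbound)
  rw [integral_div_norm_eq_neg_integral_radialDeriv hd (hu.norm_sq ℝ) hL2 hφ'int, ← integral_neg]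
  calc ∫ x, -radialDeriv (fun y => ‖u y‖ ^ 2) x ∂μ
      ≤ ∫ x, 2 * (‖u x‖ * ‖fderiv ℝ u x‖) ∂μ :=
        integral_mono hφ'int.neg (hprod.const_mul 2) fun x => (neg_le_abs _).trans (hbound x)
    _ = 2 * ∫ x, ‖u x‖ * ‖fderiv ℝ u x‖ ∂μ := integral_const_mul 2 _
    _ ≤ 2 * (√(∫ x, ‖u x‖ ^ 2 ∂μ) * √(∫ x, ‖fderiv ℝ u x‖ ^ 2 ∂μ)) := by
        gcongr
        simpa only [norm_norm] using integral_norm_mul_norm_le_sqrt_mul_sqrt hu_mem hDu_mem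
    _ = 2 * √(∫ x, ‖u x‖ ^ 2 ∂μ) * √(∫ x, ‖fderiv ℝ u x‖ ^ 2 ∂μ) := (mul_assoc _ _ _).symm

end Haar

theorem hardy_type_inequality_general (u : EuclideanSpace ℝ (Fin 2) → ℂ)
    (hu : Differentiable ℝ u)
    (hL2 : Integrable (fun x => ‖u x‖ ^ 2))
    (hgrad : Integrable (fun x => ‖fderiv ℝ u x‖ ^ 2)) :
    ∫ x, ‖u x‖ ^ 2 / ‖x‖
      ≤ 2 * Real.sqrt (∫ x, ‖u x‖ ^ 2) * Real.sqrt (∫ x, ‖fderiv ℝ u x‖ ^ 2) := by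
  have h := integral_norm_sq_div_norm_le (μ := volume) (by simp) hu hL2 hgrad
  norm_num at h
  exact h

theorem hardy_type_inequality (u : EuclideanSpace ℝ (Fin 2) → ℂ)
    (hu : Differentiable ℝ u)
    (hL2 : Integrable (fun x => ‖u x‖ ^ 2))
    (hgrad : Integrable (fun x => ‖fderiv ℝ u x‖ ^ 2))
    (hint : Integrable (fun x => ‖u x‖ ^ 2 / ‖x‖)) :
    ∫ x, ‖u x‖ ^ 2 / ‖x‖
      ≤ 2 * Real.sqrt (∫ x, ‖u x‖ ^ 2) * Real.sqrt (∫ x, ‖fderiv ℝ u x‖ ^ 2) :=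
  hardy_type_inequality_general u hu hL2 hgrad
end

section
/- Let (u, W) solve u'' + u'/r − (m^2/r^2)u = (W−1)u on (0,∞) with u ≥ 0, u not identically zero, u → 0 at infinity, W ≥ 0, and set f(r) = r^{−m} u(r). Then f satisfies f'' + ((2m+1)/r) f' = (W−1) f, and f > 0 with f' < 0 on (0,∞). -/
open Filter Set Topology NNReal

/-!
With `f = u / r^m` the equation becomes `f'' + ((2m+1)/r) f' = (W - 1) f`, so
`H = r^(2m+1) f'` satisfies `H' = r^(2m+1) (W - 1) f`.

If `f` vanished at some `r₀ > 0`, then `r₀` would be a minimum of `f ≥ 0`, so `f'(r₀) = 0` as well,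
and uniqueness for the linear ODE would force `f = 0` on `(0, r₀]`, contradicting `f(0⁺) = c > 0`.

Since `W` is nondecreasing, `W - 1` changes sign at most once. Where `W(r) < 1`, `H` is strictly
decreasing on `(0, r]` from `H(0⁺) = 0`, so `H(r) < 0`. Where `W(r) ≥ 1`, `H` is nondecreasing on
`[r, ∞)`, so `H(r) ≥ 0` would make `f` nondecreasing there, contradicting `f > 0` and `f → 0`.
-/

theorem lipschitzWith_companion {α β : ℝ} {K : ℝ≥0} (h : |α| + |β| ≤ K) :
    LipschitzWith (1 + K) fun p : ℝ × ℝ => (p.2, α * p.2 + β * p.1) := by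
  refine LipschitzWith.of_dist_le_mul fun p q => ?_
  simp only [Prod.dist_eq, Real.dist_eq, NNReal.coe_add, NNReal.coe_one]
  set d := max |p.1 - q.1| |p.2 - q.2|
  have h1 : |p.1 - q.1| ≤ d := le_max_left _ _
  have h2 : |p.2 - q.2| ≤ d := le_max_right _ _
  have hd : 0 ≤ d := (abs_nonneg _).trans h1
  have hαβ : |α * p.2 + β * p.1 - (α * q.2 + β * q.1)| ≤ K * d :=
    calc |α * p.2 + β * p.1 - (α * q.2 + β * q.1)|
        = |α * (p.2 - q.2) + β * (p.1 - q.1)| := by congr 1; ring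
      _ ≤ |α| * |p.2 - q.2| + |β| * |p.1 - q.1| := by
          rw [← abs_mul, ← abs_mul]; exact abs_add_le _ _
      _ ≤ |α| * d + |β| * d := by gcongr
      _ ≤ K * d := by rw [← add_mul]; gcongr
  exact max_le (by nlinarith [K.2]) (by nlinarith [K.2])

theorem eqOn_zero_of_second_order_linear_ODE {g α β : ℝ → ℝ} {a b : ℝ} {K : ℝ≥0}
    (hK : ∀ t ∈ Ioc a b, |α t| + |β t| ≤ K)
    (hg : ∀ t ∈ Icc a b, HasDerivAt g (deriv g t) t)
    (hg' : ∀ t ∈ Icc a b, HasDerivAt (deriv g) (α t * deriv g t + β t * g t) t)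
    (hb : g b = 0) (hb' : deriv g b = 0) : EqOn g 0 (Icc a b) := by
  let v : ℝ → ℝ × ℝ → ℝ × ℝ := fun t p => (p.2, α t * p.2 + β t * p.1)
  have hsol : ∀ t ∈ Icc a b, HasDerivAt (fun s => (g s, deriv g s)) (v t (g t, deriv g t)) t :=
    fun t ht => (hg t ht).prodMk (hg' t ht)
  have huniq := ODE_solution_unique_of_mem_Icc_left (s := fun _ => univ) (g := 0)
    (fun t ht => (lipschitzWith_companion (hK t ht)).lipschitzOnWith)
    (HasDerivAt.continuousOn hsol)
    (fun t ht => (hsol t (Ioc_subset_Icc_self ht)).hasDerivWithinAt) (fun _ _ => mem_univ _)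
    continuousOn_const
    (fun t _ => by
      simp only [Pi.zero_apply, Prod.fst_zero, Prod.snd_zero, mul_zero, add_zero, Prod.mk_zero_zero]
      exact hasDerivWithinAt_const t (Iic t) 0) (fun _ _ => mem_univ _)
    (by simp [hb, hb'])
  exact fun t ht => congrArg Prod.fst (huniq ht)

/-- `f'' + (n / r) f' = V f` on `(0, ∞)`: the radial form of `Δf = V f` in dimension `n + 1`. -/
structure IsRadialSolution (V : ℝ → ℝ) (n : ℕ) (f : ℝ → ℝ) : Prop where
  differentiableAt : ∀ r > 0, DifferentiableAt ℝ f r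
  hasDerivAt_deriv : ∀ r > 0, HasDerivAt (deriv f) (V r * f r - n / r * deriv f r) r

namespace IsRadialSolution

variable {f V : ℝ → ℝ} {n : ℕ}

theorem eqOn_zero_of_eq_zero (hsol : IsRadialSolution V n f) (hV : MonotoneOn V (Ioi 0))
    {b : ℝ} (hb : 0 < b) (h0 : f b = 0) (h0' : deriv f b = 0) : EqOn f 0 (Ioc 0 b) := by
  intro a ha
  have hpos : ∀ t ∈ Icc a b, 0 < t := fun t ht => ha.1.trans_le ht.1
  refine eqOn_zero_of_second_order_linear_ODE (α := fun t => -(n / t)) (β := V)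
    (K := (n / a + |V a| + |V b|).toNNReal) (fun t ht => ?_)
    (fun t ht => (hsol.differentiableAt t (hpos t ht)).hasDerivAt)
    (fun t ht => (hsol.hasDerivAt_deriv t (hpos t ht)).congr_deriv (by ring)) h0 h0'
    ⟨le_rfl, ha.2⟩
  have ha0 : 0 < a := ha.1
  have ht0 : 0 < t := ha0.trans ht.1
  have hα : |-(n / t)| ≤ n / a := by
    rw [abs_neg, abs_of_nonneg (by positivity)]
    gcongr
    exact ht.1.le
  have hβ : |V t| ≤ |V a| + |V b| := by
    have hVa := hV ha0 ht0 ht.1.le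
    have hVb := hV ht0 hb ht.2
    rw [abs_le]
    constructor <;> linarith [neg_abs_le (V a), le_abs_self (V b), abs_nonneg (V a),
      abs_nonneg (V b)]
  rw [Real.coe_toNNReal _ (by positivity)]
  linarith

theorem pos (hsol : IsRadialSolution V n f) (hV : MonotoneOn V (Ioi 0))
    (hnonneg : ∀ r > 0, 0 ≤ f r) {c : ℝ} (hc : 0 < c) (hlim : Tendsto f (𝓝[>] 0) (𝓝 c)) :
    ∀ r > 0, 0 < f r := by
  intro b hb
  refine (hnonneg b hb).lt_of_ne fun h0 => hc.ne' (tendsto_nhds_unique hlim ?_)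
  have hmin : IsLocalMin f b := by
    filter_upwards [Ioi_mem_nhds hb] with s hs
    rw [← h0]
    exact hnonneg s hs
  have hzero := hsol.eqOn_zero_of_eq_zero hV hb h0.symm hmin.deriv_eq_zero
  refine tendsto_const_nhds.congr' ?_
  filter_upwards [Ioo_mem_nhdsGT hb] with s hs
  exact (hzero (Ioo_subset_Ioc_self hs)).symm

theorem hasDerivAt_pow_mul_deriv (hsol : IsRadialSolution V n f) {r : ℝ} (hr : 0 < r) :
    HasDerivAt (fun s => s ^ n * deriv f s) (r ^ n * (V r * f r)) r := by
  refine ((hasDerivAt_pow n r).mul (hsol.hasDerivAt_deriv r hr)).congr_deriv ?_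
  rcases n with _ | n
  · simp
  · field_simp
    simp only [Nat.add_sub_cancel, pow_succ]
    ring

theorem pow_mul_deriv_neg_of_potential_neg (hsol : IsRadialSolution V n f)
    (hV : MonotoneOn V (Ioi 0)) (hpos : ∀ r > 0, 0 < f r)
    (hd0 : Tendsto (deriv f) (𝓝[>] 0) (𝓝 0)) {r : ℝ} (hr : 0 < r) (hVr : V r < 0) : r ^ n * deriv f r < 0 := by
  set H := fun s => s ^ n * deriv f s
  have hanti : StrictAntiOn H (Ioc 0 r) := by
    refine strictAntiOn_of_hasDerivWithinAt_neg (f' := fun s => s ^ n * (V s * f s))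
      (convex_Ioc 0 r)
      (fun s hs => (hsol.hasDerivAt_pow_mul_deriv hs.1).continuousAt.continuousWithinAt)
      (fun s hs => ?_) (fun s hs => ?_)
    all_goals rw [interior_Ioc] at hs
    · exact (hsol.hasDerivAt_pow_mul_deriv hs.1).hasDerivWithinAt
    · have hVs : V s < 0 := (hV hs.1 hr hs.2.le).trans_lt hVr
      exact mul_neg_of_pos_of_neg (pow_pos hs.1 n) (mul_neg_of_neg_of_pos hVs (hpos s hs.1))
  have hH0 : Tendsto H (𝓝[>] 0) (𝓝 0) := by
    have hpow : Tendsto (fun s : ℝ => s ^ n) (𝓝[>] 0) (𝓝 (0 ^ n)) :=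
      ((continuous_pow n).tendsto 0).mono_left nhdsWithin_le_nhds
    simpa using hpow.mul hd0
  have hhalf : H (r / 2) ≤ 0 := by
    refine ge_of_tendsto hH0 ?_
    filter_upwards [Ioo_mem_nhdsGT (half_pos hr)] with s hs
    exact (hanti ⟨hs.1, by linarith [hs.2]⟩ ⟨half_pos hr, by linarith⟩ hs.2).le
  have hlt : H r < H (r / 2) :=
    hanti ⟨half_pos hr, by linarith⟩ ⟨hr, le_rfl⟩ (half_lt_self hr)
  exact hlt.trans_le hhalf

theorem pow_mul_deriv_neg_of_potential_nonneg (hsol : IsRadialSolution V n f)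
    (hV : MonotoneOn V (Ioi 0)) (hpos : ∀ r > 0, 0 < f r) (htop : Tendsto f atTop (𝓝 0))
    {r : ℝ} (hr : 0 < r) (hVr : 0 ≤ V r) : r ^ n * deriv f r < 0 := by
  by_contra! hH
  have hpos' : ∀ s ∈ Ici r, 0 < s := fun s hs => hr.trans_le hs
  have hHmono : MonotoneOn (fun s => s ^ n * deriv f s) (Ici r) := by
    refine monotoneOn_of_hasDerivWithinAt_nonneg (f' := fun s => s ^ n * (V s * f s))
      (convex_Ici r)
      (fun s hs => (hsol.hasDerivAt_pow_mul_deriv (hpos' s hs)).continuousAt.continuousWithinAt)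
      (fun s hs => ?_) (fun s hs => ?_) <;>
    rw [interior_Ici] at hs <;> have hs0 := hpos' s (Ioi_subset_Ici_self hs)
    · exact (hsol.hasDerivAt_pow_mul_deriv hs0).hasDerivWithinAt
    · have hVs : 0 ≤ V s := hVr.trans (hV hr hs0 (le_of_lt hs))
      exact mul_nonneg (pow_nonneg hs0.le n) (mul_nonneg hVs (hpos s hs0).le)
  have hfmono : MonotoneOn f (Ici r) := by
    refine monotoneOn_of_hasDerivWithinAt_nonneg (f' := deriv f) (convex_Ici r)
      (fun s hs => (hsol.differentiableAt s (hpos' s hs)).continuousAt.continuousWithinAt)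
      (fun s hs => ?_) (fun s hs => ?_) <;>
    rw [interior_Ici] at hs <;> have hs0 := hpos' s (Ioi_subset_Ici_self hs)
    · exact (hsol.differentiableAt s hs0).hasDerivAt.hasDerivWithinAt
    · exact nonneg_of_mul_nonneg_right
        (hH.trans (hHmono self_mem_Ici (Ioi_subset_Ici_self hs) (le_of_lt hs))) (pow_pos hs0 n)
  have hle : f r ≤ 0 := by
    refine ge_of_tendsto htop ?_
    filter_upwards [eventually_ge_atTop r] with s hs
    exact hfmono self_mem_Ici hs hs
  exact (hpos r hr).not_ge hle

theorem deriv_lt_zero (hsol : IsRadialSolution V n f) (hV : MonotoneOn V (Ioi 0))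
    (hpos : ∀ r > 0, 0 < f r) (htop : Tendsto f atTop (𝓝 0))
    (hd0 : Tendsto (deriv f) (𝓝[>] 0) (𝓝 0)) : ∀ r > 0, deriv f r < 0 := by
  intro r hr
  have hH : r ^ n * deriv f r < 0 := by
    rcases lt_or_ge (V r) 0 with hVr | hVr
    · exact hsol.pow_mul_deriv_neg_of_potential_neg hV hpos hd0 hr hVr
    · exact hsol.pow_mul_deriv_neg_of_potential_nonneg hV hpos htop hr hVr
  exact Left.neg_of_mul_neg_right hH (pow_nonneg hr.le n)

end IsRadialSolution

section Reduction

variable {u : ℝ → ℝ}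

theorem hasDerivAt_div_pow {u' r : ℝ} (m : ℕ) (hu : HasDerivAt u u' r) (hr : r ≠ 0) :
    HasDerivAt (fun s => u s / s ^ m) (u' / r ^ m - m * (u r / r ^ (m + 1))) r := by
  refine (hu.div (hasDerivAt_pow m r) (pow_ne_zero m hr)).congr_deriv ?_
  rcases m with _ | m
  · simp
  · field_simp
    simp only [Nat.add_sub_cancel, pow_succ]
    ring

theorem tendsto_div_pow_atTop_zero (hu : Tendsto u atTop (𝓝 0)) (m : ℕ) :
    Tendsto (fun s => u s / s ^ m) atTop (𝓝 0) := by
  refine squeeze_zero_norm' ?_ (by simpa using hu.norm)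
  filter_upwards [eventually_ge_atTop 1] with s hs
  rw [norm_div, norm_pow, Real.norm_of_nonneg (zero_le_one.trans hs)]
  exact div_le_self (norm_nonneg _) (one_le_pow₀ hs)

theorem ContDiffOn.hasDerivAt_and_hasDerivAt_deriv {s : Set ℝ} (hu : ContDiffOn ℝ 2 u s)
    (hs : IsOpen s) {r : ℝ} (hr : r ∈ s) :
    HasDerivAt u (deriv u r) r ∧ HasDerivAt (deriv u) (deriv (deriv u) r) r :=
  ⟨((hu.contDiffAt (hs.mem_nhds hr)).differentiableAt (by norm_num)).hasDerivAt,
    (((hu.deriv_of_isOpen hs (by norm_num) : ContDiffOn ℝ 1 (deriv u) s).contDiffAt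
      (hs.mem_nhds hr)).differentiableAt one_ne_zero).hasDerivAt⟩

theorem isRadialSolution_div_pow {V : ℝ → ℝ} {m : ℕ} (hu : ContDiffOn ℝ 2 u (Ioi 0))
    (hode : ∀ r > (0 : ℝ),
      deriv (deriv u) r + deriv u r / r - (m : ℝ) ^ 2 / r ^ 2 * u r = V r * u r) :
    IsRadialSolution V (2 * m + 1) fun s => u s / s ^ m := by
  have hu' : ∀ r > 0, HasDerivAt u (deriv u r) r ∧ HasDerivAt (deriv u) (deriv (deriv u) r) r :=
    fun r hr => hu.hasDerivAt_and_hasDerivAt_deriv isOpen_Ioi hr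
  have hderiv : ∀ r > 0,
      deriv (fun s => u s / s ^ m) r = deriv u r / r ^ m - m * (u r / r ^ (m + 1)) :=
    fun r hr => (hasDerivAt_div_pow m (hu' r hr).1 hr.ne').deriv
  refine ⟨fun r hr => (hasDerivAt_div_pow m (hu' r hr).1 hr.ne').differentiableAt,
    fun r hr => ?_⟩
  have h := (hasDerivAt_div_pow m (hu' r hr).2 hr.ne').sub
    ((hasDerivAt_div_pow (m + 1) (hu' r hr).1 hr.ne').const_mul (m : ℝ))
  refine (h.congr_of_eventuallyEq
    (eventually_of_mem (Ioi_mem_nhds hr) fun s hs => hderiv s hs)).congr_deriv ?_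
  have hu'' : deriv (deriv u) r = V r * u r - deriv u r / r + (m : ℝ) ^ 2 / r ^ 2 * u r := by
    linarith [hode r hr]
  rw [hderiv r hr, hu'']
  field_simp
  push_cast
  ring

end Reduction

theorem reduced_function_positive_decreasing_general (m : ℕ)
    (u W : ℝ → ℝ) (c : ℝ)
    (hu : ContDiffOn ℝ 2 u (Set.Ioi 0))
    (hode : ∀ r > (0 : ℝ),
      deriv (deriv u) r + deriv u r / r - (m : ℝ) ^ 2 / r ^ 2 * u r
        = (W r - 1) * u r)
    (hu0 : ∀ r > (0 : ℝ), 0 ≤ u r)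
    (hulim : Tendsto u atTop (nhds 0))
    (hWmono : MonotoneOn W (Set.Ici 0))
    (hf0 : Tendsto (fun r => u r / r ^ m) (nhdsWithin 0 (Set.Ioi 0)) (nhds c))
    (hc : 0 < c)
    (hf'0 : Tendsto (deriv fun r => u r / r ^ m)
      (nhdsWithin 0 (Set.Ioi 0)) (nhds 0)) :
    ∀ r > (0 : ℝ),
      (deriv (deriv fun s => u s / s ^ m) r
          + (2 * (m : ℝ) + 1) / r * deriv (fun s => u s / s ^ m) r
        = (W r - 1) * (u r / r ^ m)) ∧
      0 < u r / r ^ m ∧ deriv (fun s => u s / s ^ m) r < 0 := by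
  have hV : MonotoneOn (fun r => W r - 1) (Ioi 0) := fun a ha b hb hab =>
    sub_le_sub_right (hWmono (Ioi_subset_Ici_self ha) (Ioi_subset_Ici_self hb) hab) 1
  have hsol : IsRadialSolution (fun r => W r - 1) (2 * m + 1) fun s => u s / s ^ m :=
    isRadialSolution_div_pow hu hode
  have hpos := hsol.pos hV (fun r hr => div_nonneg (hu0 r hr) (pow_nonneg hr.le m)) hc hf0
  have hneg := hsol.deriv_lt_zero hV hpos (tendsto_div_pow_atTop_zero hulim m) hf'0
  intro r hr
  refine ⟨?_, hpos r hr, hneg r hr⟩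
  rw [(hsol.hasDerivAt_deriv r hr).deriv]
  push_cast
  ring

theorem reduced_function_positive_decreasing (m : ℕ) (hm : 0 < m)
    (u W : ℝ → ℝ) (c : ℝ)
    (hu : ContDiffOn ℝ 2 u (Set.Ioi 0))
    (hW : ContinuousOn W (Set.Ici 0))
    (hode : ∀ r > (0 : ℝ),
      deriv (deriv u) r + deriv u r / r - (m : ℝ) ^ 2 / r ^ 2 * u r
        = (W r - 1) * u r)
    (hu0 : ∀ r > (0 : ℝ), 0 ≤ u r)
    (hune : ∃ r > (0 : ℝ), u r ≠ 0)
    (hulim : Tendsto u atTop (nhds 0))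
    (hW0 : W 0 = 0) (hWnonneg : ∀ r, 0 ≤ W r) (hWmono : MonotoneOn W (Set.Ici 0))
    (hf0 : Tendsto (fun r => u r / r ^ m) (nhdsWithin 0 (Set.Ioi 0)) (nhds c))
    (hc : 0 < c)
    (hf'0 : Tendsto (deriv fun r => u r / r ^ m)
      (nhdsWithin 0 (Set.Ioi 0)) (nhds 0)) :
    ∀ r > (0 : ℝ),
      (deriv (deriv fun s => u s / s ^ m) r
          + (2 * (m : ℝ) + 1) / r * deriv (fun s => u s / s ^ m) r
        = (W r - 1) * (u r / r ^ m)) ∧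
      0 < u r / r ^ m ∧ deriv (fun s => u s / s ^ m) r < 0 :=
  reduced_function_positive_decreasing_general m u W c hu hode hu0 hulim hWmono hf0 hc hf'0
end

section
/- Suppose that for every γ > 0 and every u ∈ X with ∫|u|^2 = λ one has T(u) + (γ/2)V(u) ≥ e_0(λ) := (γλ^2/16π)(1 + 8π(1+I)/N − 2 ln(γλ/N)), where N, I > 0 are fixed constants. Then −V(u) ≤ (λ^2/4π) ln(8π T(u)/(Nλ)) − ((I+1)/N − 1/(8π)) λ^2. -/
open Real

/-- For `c > 0` the supremum over `γ` of the left-hand side is `β * exp (α / β - 1) / c`; the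
single evaluation at `γ = T / β` already yields the resulting sharp bound on `T`. -/
theorem le_mul_log_add_one_of_forall_mul_sub_log_le {T α β c : ℝ} (hT : 0 < T) (hβ : 0 < β)
    (h : ∀ γ > 0, γ * (α - β * log (γ * c)) ≤ T) :
    α ≤ β * (log (T / β * c) + 1) := by
  have hγ : 0 < T / β := by positivity
  have hmul : T / β * (α - β * log (T / β * c)) ≤ T / β * β := by
    rw [div_mul_cancel₀ T hβ.ne']
    exact h (T / β) hγ
  linarith [le_of_mul_le_mul_left hmul hγ]

theorem log_HLS_from_energy_bound_general (T V lam N I : ℝ)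
    (hT : 0 < T) (hlam : 0 < lam)
    (hbound : ∀ γ > (0 : ℝ), T + (γ / 2) * V ≥
      (γ * lam ^ 2 / (16 * Real.pi)) *
        (1 + 8 * Real.pi * (1 + I) / N - 2 * Real.log (γ * lam / N))) :
    -V ≤ (lam ^ 2 / (4 * Real.pi)) * Real.log (8 * Real.pi * T / (N * lam))
      - ((I + 1) / N - 1 / (8 * Real.pi)) * lam ^ 2 := by
  set α := lam ^ 2 / (16 * π) * (1 + 8 * π * (1 + I) / N) - V / 2
  set β := lam ^ 2 / (8 * π)
  have hα : α ≤ β * (log (T / β * (lam / N)) + 1) :=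
    le_mul_log_add_one_of_forall_mul_sub_log_le hT (by positivity) fun γ hγ => by
      rw [← mul_div_assoc]
      linear_combination hbound γ hγ
  have harg : T / β * (lam / N) = 8 * π * T / (N * lam) := by
    simp only [β]
    field_simp
  set L := log (8 * π * T / (N * lam))
  have hgap : (lam ^ 2 / (4 * π)) * L - ((I + 1) / N - 1 / (8 * π)) * lam ^ 2 + V
      = 2 * (β * (L + 1) - α) := by
    simp only [α, β]
    field_simp
    ring
  rw [harg] at hα
  linarith

/-- Optimizing the ground-state energy bound over the coupling `γ` yields the
sharp logarithmic Hardy–Littlewood–Sobolev-type inequality. -/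
theorem log_HLS_from_energy_bound (T V lam N I : ℝ)
    (hT : 0 < T) (hlam : 0 < lam) (hN : 0 < N) (hI : 0 < I)
    (hbound : ∀ γ > (0 : ℝ), T + (γ / 2) * V ≥
      (γ * lam ^ 2 / (16 * Real.pi)) *
        (1 + 8 * Real.pi * (1 + I) / N - 2 * Real.log (γ * lam / N))) :
    -V ≤ (lam ^ 2 / (4 * Real.pi)) * Real.log (8 * Real.pi * T / (N * lam))
      - ((I + 1) / N - 1 / (8 * Real.pi)) * lam ^ 2 :=
  log_HLS_from_energy_bound_general T V lam N I hT hlam hbound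
end
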